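/- arXiv:1104.4427 — 3 statements merged into one kernel-verified Lean document; each statement's English description precedes it below -/
import Mathlib

section
/- If p and q are nonempty words over an alphabet Σ and the concatenation pq is a primitive word, then the two-element set {p, q} is a code. -/
/-!
If a word has two different factorizations over `{p, q}`, cancelling the common leading factors
gives `p x = q y` with `x, y` products of `p` and `q`. Writing `q = p t`, every product of `p`
and `q` is a product of `p` and `t`, and one starting with `p`; this yields the same situation
for `(p, t)`, of smaller total length, so by induction `pq = qp`. Commuting words are powers
`vᵃ, vᵇ` of a common word, so `pq = vᵃ⁺ᵇ` with `a + b ≥ 2` would not be primitive.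
-/

/-- `wpow v n` is the word `vⁿ`, the `n`-fold concatenation of the word `v` with itself. -/
def wpow {α : Type*} (v : List α) : ℕ → List α
  | 0 => []
  | n + 1 => v ++ wpow v n

/-- A nonempty word `u` is primitive if `u = vⁿ` implies `n = 1`. -/
def Primitive {α : Type*} (u : List α) : Prop :=
  u ≠ [] ∧ ∀ (v : List α) (n : ℕ), u = wpow v n → n = 1

/-- A set of words `C` is a code if any two factorizations of a word into elements
of `C` coincide. -/
def IsCode {α : Type*} (C : Set (List α)) : Prop :=
  ∀ l₁ l₂ : List (List α), (∀ u ∈ l₁, u ∈ C) → (∀ v ∈ l₂, v ∈ C) →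
    l₁.flatten = l₂.flatten → l₁ = l₂

section

variable {α : Type*}

lemma wpow_add (v : List α) (m n : ℕ) : wpow v (m + n) = wpow v m ++ wpow v n := by
  induction m with
  | zero => rw [Nat.zero_add]; rfl
  | succ m ih => rw [Nat.add_right_comm, wpow, wpow, ih, List.append_assoc]

lemma exists_eq_append_of_length_le {p q x y : List α} (h : p ++ x = q ++ y)
    (hpq : p.length ≤ q.length) : ∃ t, q = p ++ t :=
  List.prefix_of_prefix_length_le ⟨x, h⟩ ⟨y, rfl⟩ hpq |>.imp fun _ ht => ht.symm

/-- Lyndon–Schützenberger: commuting words are powers of a common word. -/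
theorem exists_eq_wpow_of_append_comm {p q : List α} (h : p ++ q = q ++ p) :
    ∃ v a b, p = wpow v a ∧ q = wpow v b := by
  obtain ⟨n, hn⟩ : ∃ n, p.length + q.length = n := ⟨_, rfl⟩
  induction n using Nat.strong_induction_on generalizing p q with
  | _ n ih =>
  wlog hpq : p.length ≤ q.length generalizing p q
  · obtain ⟨v, a, b, hq, hp⟩ := this h.symm (by omega) (by omega)
    exact ⟨v, b, a, hp, hq⟩
  rcases eq_or_ne p [] with rfl | hp
  · exact ⟨q, 0, 1, rfl, (List.append_nil q).symm⟩
  obtain ⟨t, rfl⟩ := exists_eq_append_of_length_le h hpq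
  have hpt : p ++ t = t ++ p := by simpa using h
  have : p.length + t.length < n := by simp [← hn, List.length_pos_iff.2 hp]
  obtain ⟨v, a, b, rfl, rfl⟩ := ih _ this hpt rfl
  exact ⟨v, a, a + b, rfl, (wpow_add v a b).symm⟩

theorem Primitive.append_ne_append_comm {p q : List α} (h : Primitive (p ++ q))
    (hp : p ≠ []) (hq : q ≠ []) : p ++ q ≠ q ++ p := by
  intro hcomm
  obtain ⟨v, a, b, rfl, rfl⟩ := exists_eq_wpow_of_append_comm hcomm
  have ha : a ≠ 0 := by rintro rfl; exact hp rfl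
  have hb : b ≠ 0 := by rintro rfl; exact hq rfl
  have := h.2 v (a + b) (wpow_add v a b).symm
  omega

lemma exists_subset_pair_flatten_eq {p t : List α} {A : List (List α)} (hA : A ⊆ [p, p ++ t]) :
    ∃ M ⊆ [p, t], M.flatten = A.flatten := by
  induction A with
  | nil => exact ⟨[], List.nil_subset _, rfl⟩
  | cons u A ih =>
    obtain ⟨hu, hA⟩ := List.cons_subset.1 hA
    obtain ⟨M, hM, hMA⟩ := ih hA
    rcases List.mem_pair.1 hu with rfl | rfl
    · exact ⟨u :: M, by simp [List.cons_subset, hM], by simp [hMA]⟩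
    · exact ⟨p :: t :: M, by simp [List.cons_subset, hM], by simp [hMA]⟩

lemma exists_subset_pair_append_flatten_eq {p t : List α} {A : List (List α)}
    (hA : A ⊆ [p, p ++ t]) (hne : A ≠ []) :
    ∃ M ⊆ [p, t], p ++ M.flatten = A.flatten := by
  obtain ⟨u, A, rfl⟩ := List.exists_cons_of_ne_nil hne
  obtain ⟨hu, hA⟩ := List.cons_subset.1 hA
  obtain ⟨M, hM, hMA⟩ := exists_subset_pair_flatten_eq hA
  rcases List.mem_pair.1 hu with rfl | rfl
  · exact ⟨M, hM, by simp [hMA]⟩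
  · exact ⟨t :: M, by simp [List.cons_subset, hM], by simp [hMA]⟩

theorem append_comm_of_append_flatten_eq {p q : List α} {A B : List (List α)}
    (hA : A ⊆ [p, q]) (hB : B ⊆ [p, q]) (h : p ++ A.flatten = q ++ B.flatten) :
    p ++ q = q ++ p := by
  obtain ⟨n, hn⟩ : ∃ n, p.length + q.length = n := ⟨_, rfl⟩
  induction n using Nat.strong_induction_on generalizing p q A B with
  | _ n ih =>
  wlog hpq : p.length ≤ q.length generalizing p q A B
  · have hswap : [p, q] ⊆ [q, p] := (List.Perm.swap q p []).subset
    exact (this (List.Subset.trans hB hswap) (List.Subset.trans hA hswap) h.symm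
      (by omega) (by omega)).symm
  rcases eq_or_ne p [] with rfl | hp
  · simp
  obtain ⟨t, rfl⟩ := exists_eq_append_of_length_le h hpq
  rcases eq_or_ne t [] with rfl | ht
  · simp
  have hAt : A.flatten = t ++ B.flatten := by simpa using h
  have hAne : A ≠ [] := by rintro rfl; simp [ht] at hAt
  obtain ⟨M, hM, hMA⟩ := exists_subset_pair_append_flatten_eq hA hAne
  obtain ⟨N, hN, hNB⟩ := exists_subset_pair_flatten_eq hB
  have hlt : p.length + t.length < n := by simp [← hn, List.length_pos_iff.2 hp]
  have hpt : p ++ t = t ++ p := ih _ hlt hM hN (by rw [hMA, hNB, hAt]) rfl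
  rw [List.append_assoc p t p, ← hpt]

theorem isCode_of_eq_of_append_flatten_eq {C : Set (List α)} (hnil : [] ∉ C)
    (hhead : ∀ u ∈ C, ∀ v ∈ C, ∀ x y : List (List α), (∀ w ∈ x, w ∈ C) → (∀ w ∈ y, w ∈ C) →
      u ++ x.flatten = v ++ y.flatten → u = v) :
    IsCode C := by
  intro l₁
  induction l₁ with
  | nil =>
    rintro (_ | ⟨v, y⟩) - h₂ h
    · rfl
    · have hv : v = [] := (List.append_eq_nil_iff.1 h.symm).1
      exact absurd (hv ▸ h₂ v List.mem_cons_self) hnil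
  | cons u x ih =>
    rintro (_ | ⟨v, y⟩) h₁ h₂ h
    · have hu : u = [] := (List.append_eq_nil_iff.1 h).1
      exact absurd (hu ▸ h₁ u List.mem_cons_self) hnil
    · simp only [List.forall_mem_cons, List.flatten_cons] at h₁ h₂ h
      obtain rfl := hhead u h₁.1 v h₂.1 x y h₁.2 h₂.2 h
      rw [ih y h₁.2 h₂.2 (List.append_cancel_left h)]

end

/-- If `pq` is primitive for nonempty words `p, q`, then `{p, q}` is a code. -/
theorem code_of_primitive_cat {α : Type*} (p q : List α)
    (hp : p ≠ []) (hq : q ≠ []) (h : Primitive (p ++ q)) :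
    IsCode ({p, q} : Set (List α)) := by
  have hnc := h.append_ne_append_comm hp hq
  have hsub (x : List (List α)) (hx : ∀ w ∈ x, w ∈ ({p, q} : Set (List α))) : x ⊆ [p, q] :=
    fun w hw => by simpa using hx w hw
  refine isCode_of_eq_of_append_flatten_eq (by simp [hp.symm, hq.symm]) ?_
  rintro u hu v hv x y hx hy hxy
  simp only [Set.mem_insert_iff, Set.mem_singleton_iff] at hu hv
  rcases hu with rfl | rfl <;> rcases hv with rfl | rfl
  · rfl
  · exact absurd (append_comm_of_append_flatten_eq (hsub x hx) (hsub y hy) hxy) hnc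
  · exact absurd (append_comm_of_append_flatten_eq (hsub y hy) (hsub x hx) hxy.symm) hnc
  · rfl
end

section
/- (Borwein) Let w be a nonempty word over an alphabet Σ and let a be a letter of Σ. If neither w nor wa is primitive, then w is a power of the letter a, i.e., w = a^k for some k ≥ 1. -/
lemma wpow_length {α : Type*} (v : List α) : ∀ n, (wpow v n).length = n * v.length := by
  intro n
  induction n with
  | zero => simp [wpow]
  | succ m ih => simp [wpow, ih, Nat.succ_mul]; omega

lemma wpow_comm {α : Type*} (v : List α) : ∀ n, v ++ wpow v n = wpow v n ++ v := by
  intro n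
  induction n with
  | zero => simp [wpow]
  | succ m ih =>
    show v ++ (v ++ wpow v m) = (v ++ wpow v m) ++ v
    conv_lhs => rw [ih]
    rw [← List.append_assoc]

lemma wpow_succ' {α : Type*} (v : List α) (n : ℕ) : wpow v (n + 1) = wpow v n ++ v := by
  show v ++ wpow v n = _
  exact wpow_comm v n

lemma wpow_nil {α : Type*} : ∀ n, wpow ([] : List α) n = [] := by
  intro n; induction n with
  | zero => rfl
  | succ m ih => show [] ++ wpow [] m = []; simpa using ih

lemma wpow_replicate {α : Type*} (a : α) : ∀ n, wpow [a] n = List.replicate n a := by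
  intro n; induction n with
  | zero => rfl
  | succ m ih => show [a] ++ wpow [a] m = _; simp [ih, List.replicate_succ]

/-- Periodicity predicate for functions on an initial segment. -/
def HasPeriod {α : Type*} (f : ℕ → α) (n p : ℕ) : Prop :=
  ∀ i, i + p < n → f (i + p) = f i

lemma period_sub {α : Type*} (f : ℕ → α) (n p q : ℕ) (hpq : p ≤ q) (hqn : p + q ≤ n)
    (hp : HasPeriod f n p) (hq : HasPeriod f n q) : HasPeriod f n (q - p) := by
  intro i hi
  by_cases hcase : i + q < n
  · have h1 : f (i + (q - p) + p) = f (i + (q - p)) := hp _ (by omega)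
    have h2 : f (i + q) = f i := hq i hcase
    have : i + (q - p) + p = i + q := by omega
    rw [this] at h1
    rw [← h1, h2]
  · have hip : p ≤ i := by omega
    have h1 : f (i - p + q) = f (i - p) := hq _ (by omega)
    have h2 : f (i - p + p) = f (i - p) := hp _ (by omega)
    have e1 : i - p + q = i + (q - p) := by omega
    have e2 : i - p + p = i := by omega
    rw [e1] at h1
    rw [e2] at h2
    rw [h1, ← h2]

lemma fine_wilf {α : Type*} (f : ℕ → α) (n : ℕ) :
    ∀ q p, p ≤ q → p + q ≤ n → HasPeriod f n p → HasPeriod f n q →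
      HasPeriod f n (Nat.gcd p q) := by
  intro q
  induction q using Nat.strong_induction_on with
  | _ q ih =>
    intro p hle hsum hp hq
    rcases Nat.eq_zero_or_pos p with h0 | h0
    · subst h0; simpa using hq
    by_cases hpq : p = q
    · subst hpq; simpa [Nat.gcd_self] using hp
    have hlt : p < q := lt_of_le_of_ne hle hpq
    have hsub : HasPeriod f n (q - p) := period_sub f n p q hle hsum hp hq
    have hgcd : Nat.gcd p (q - p) = Nat.gcd p q := by
      conv_rhs => rw [show q = (q - p) + p by omega]
      rw [Nat.gcd_add_self_right]
    rcases le_total p (q - p) with h | h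
    · have := ih (q - p) (by omega) p h (by omega) hp hsub
      rwa [hgcd] at this
    · have := ih p (by omega) (q - p) h (by omega) hsub hp
      rwa [Nat.gcd_comm, hgcd] at this

/-- A word of the form `v ++ w'` with `w'` a prefix of the whole word has period `|v|`. -/
lemma period_of_prefix {α : Type*} (v w' w : List α) (d : α) (hw : w = v ++ w')
    (hpre : w' <+: w) :
    ∀ i, i + v.length < w.length → w.getD (i + v.length) d = w.getD i d := by
  intro i hi
  have hlen : w.length = v.length + w'.length := by rw [hw]; simp
  have hi' : i < w'.length := by omega
  have h1 : w.getD (i + v.length) d = w'.getD i d := by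
    rw [hw, List.getD_append_right _ _ _ _ (by omega)]
    congr 1
    omega
  have h2 : w.getD i d = w'.getD i d := by
    obtain ⟨t, ht⟩ := hpre
    rw [← ht, List.getD_append _ _ _ _ hi']
  rw [h1, h2]

/-- A power `wpow u k` with `k ≥ 1` has period `|u|`. -/
lemma period_of_pow {α : Type*} (u : List α) (k : ℕ) (hk : 1 ≤ k) (d : α) :
    ∀ i, i + u.length < (wpow u k).length →
      (wpow u k).getD (i + u.length) d = (wpow u k).getD i d := by
  obtain ⟨j, rfl⟩ : ∃ j, k = j + 1 := ⟨k - 1, by omega⟩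
  apply period_of_prefix u (wpow u j) _ d rfl
  exact ⟨u, (wpow_succ' u j).symm⟩

lemma not_primitive_exists {α : Type*} (w : List α) (hw : w ≠ []) (h : ¬ Primitive w) :
    ∃ u k, w = wpow u k ∧ 2 ≤ k ∧ u ≠ [] := by
  have h' : ∃ u k, w = wpow u k ∧ k ≠ 1 := by
    by_contra hc
    push_neg at hc
    exact h ⟨hw, hc⟩
  obtain ⟨u, k, hwu, hk⟩ := h'
  refine ⟨u, k, hwu, ?_, ?_⟩
  · rcases k with _ | _ | k
    · exact absurd hwu.symm (by simpa [wpow] using hw)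
    · exact absurd rfl hk
    · omega
  · rintro rfl
    exact hw (by rw [hwu, wpow_nil])

/-- Borwein: if neither `w` nor `wa` is primitive (with `w` nonempty, `a` a letter),
then `w` is a power `aᵏ` of the letter `a` with `k ≥ 1`. -/
theorem borwein {α : Type*} (w : List α) (a : α) (hw : w ≠ [])
    (h1 : ¬ Primitive w) (h2 : ¬ Primitive (w ++ [a])) :
    ∃ k : ℕ, 1 ≤ k ∧ w = wpow [a] k := by
  obtain ⟨u, k, hwu, hk, hu⟩ := not_primitive_exists w hw h1
  obtain ⟨v, m, hwv, hm, hv⟩ := not_primitive_exists (w ++ [a]) (by simp) h2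
  have hple : 1 ≤ u.length := List.length_pos_iff.mpr hu
  have hqle : 1 ≤ v.length := List.length_pos_iff.mpr hv
  have hnp : w.length = k * u.length := by rw [hwu, wpow_length]
  have hnq : w.length + 1 = m * v.length := by
    have := wpow_length v m
    rw [← hwv] at this
    simpa using this
  have hn1 : 1 ≤ w.length := List.length_pos_iff.mpr hw
  have h2p : 2 * u.length ≤ w.length := by nlinarith
  have h2q : 2 * v.length ≤ w.length + 1 := by nlinarith
  set f : ℕ → α := fun i => w.getD i a with hf
  have hagree : ∀ i, (w ++ [a]).getD i a = f i := by
    intro i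
    rcases lt_or_ge i w.length with h | h
    · rw [List.getD_append _ _ _ _ h]
    · have e1 : (w ++ [a]).getD i a = a := by
        rw [List.getD_append_right _ _ _ _ (by omega)]
        rcases Nat.eq_zero_or_pos (i - w.length) with h0 | h0
        · rw [h0]; rfl
        · exact List.getD_eq_default _ _ (by simp only [List.length_singleton]; omega)
      have e2 : f i = a := by
        rw [hf]; exact List.getD_eq_default _ _ (by omega)
      rw [e1, e2]
  have hperp : HasPeriod f w.length u.length := by
    intro i hi
    have := period_of_pow u k (by omega) a i (by rw [← hwu]; exact hi)
    rw [← hwu] at this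
    exact this
  have hperq1 : HasPeriod f (w.length + 1) v.length := by
    intro i hi
    have hlen : (w ++ [a]).length = w.length + 1 := by simp
    have := period_of_pow v m (by omega) a i (by rw [← hwv, hlen]; exact hi)
    rw [← hwv] at this
    rw [← hagree, ← hagree]
    exact this
  have hperq : HasPeriod f w.length v.length := fun i hi => hperq1 i (by omega)
  have hsum : u.length + v.length ≤ w.length := by omega
  have hg1 : Nat.gcd u.length v.length = 1 := by
    have hd1 : Nat.gcd u.length v.length ∣ w.length :=
      dvd_trans (Nat.gcd_dvd_left _ _) ⟨k, by rw [hnp, Nat.mul_comm]⟩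
    have hd2 : Nat.gcd u.length v.length ∣ w.length + 1 :=
      dvd_trans (Nat.gcd_dvd_right _ _) ⟨m, by rw [hnq, Nat.mul_comm]⟩
    have : Nat.gcd u.length v.length ∣ 1 := by
      have := Nat.dvd_sub hd2 hd1
      simpa using this
    exact Nat.dvd_one.mp this
  have hper1 : HasPeriod f w.length 1 := by
    rcases le_total u.length v.length with h | h
    · have := fine_wilf f w.length v.length u.length h hsum hperp hperq
      rwa [hg1] at this
    · have := fine_wilf f w.length u.length v.length h (by omega) hperq hperp
      rwa [Nat.gcd_comm, hg1] at this
  have hconst : ∀ i, i < w.length → f i = f 0 := by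
    intro i
    induction i with
    | zero => intro _; rfl
    | succ j ih =>
      intro h
      have := hper1 j (by omega)
      rw [this]
      exact ih (by omega)
  have ha : a = f 0 := by
    have h1' : f (w.length - v.length + v.length) = f (w.length - v.length) :=
      hperq1 (w.length - v.length) (by omega)
    have e : w.length - v.length + v.length = w.length := by omega
    rw [e] at h1'
    have hfn : f w.length = a := by
      rw [hf]; exact List.getD_eq_default _ _ (le_refl _)
    rw [← hfn, h1']
    exact hconst (w.length - v.length) (by omega)
  refine ⟨w.length, hn1, ?_⟩
  rw [wpow_replicate]
  apply List.eq_replicate_of_mem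
  intro b hb
  obtain ⟨i, hi, hbi⟩ := List.mem_iff_getElem.mp hb
  have : f i = b := by
    rw [hf]
    simp only
    rw [List.getD_eq_getElem _ _ hi, hbi]
  rw [← this, hconst i hi, ← ha]
end

section
/- Let Σ be an alphabet with at least two distinct letters. Then the set Q of all primitive words over Σ is not a regular language. -/
section Words

variable {α : Type*}

theorem length_wpow (v : List α) (n : ℕ) : (wpow v n).length = n * v.length := by
  induction n with
  | zero => simp [wpow]
  | succ n ih => simp [wpow, ih, Nat.succ_mul, Nat.add_comm]

theorem mem_of_mem_wpow {c : α} {v : List α} {n : ℕ} (h : c ∈ wpow v n) : c ∈ v := by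
  induction n with
  | zero => simp [wpow] at h
  | succ n ih => exact (List.mem_append.1 h).elim id ih

theorem not_primitive_append_self (v : List α) : ¬ Primitive (v ++ v) :=
  fun h => absurd (h.2 v 2 (by simp [wpow])) (by decide)

/-- A proper power `vᵏ` has `v` as a prefix of length at most half its length, so every
letter of `vᵏ` already occurs in its first half. -/
theorem primitive_of_mem_of_notMem_take_half {w : List α} {c : α} (hc : c ∈ w)
    (hhalf : c ∉ w.take (w.length / 2)) : Primitive w := by
  refine ⟨List.ne_nil_of_mem hc, fun v k hw => ?_⟩
  subst hw
  obtain _ | _ | k := k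
  · simp [wpow] at hc
  · rfl
  · have hlen : v.length ≤ (wpow v (k + 2)).length / 2 := by
      rw [length_wpow, Nat.le_div_iff_mul_le two_pos]
      nlinarith
    have hprefix : v <+: (wpow v (k + 2)).take ((wpow v (k + 2)).length / 2) :=
      List.prefix_take_iff.2 ⟨List.prefix_append _ _, hlen⟩
    exact absurd (hprefix.subset (mem_of_mem_wpow hc)) hhalf

theorem primitive_replicate_append_replicate {a b : α} (hab : a ≠ b) {m n : ℕ} (hnm : n < m) :
    Primitive (List.replicate m a ++ [b] ++ (List.replicate n a ++ [b])) := by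
  refine primitive_of_mem_of_notMem_take_half (c := b) (by simp) ?_
  rw [List.take_append_of_le_length (by simp; omega),
    List.take_append_of_le_length (by simp; omega), List.take_replicate, List.mem_replicate]
  exact fun h => hab h.2.symm

end Words

theorem Language.not_isRegular_of_injective_leftQuotient {α ι : Type*} [Infinite ι]
    {L : Language α} (x : ι → List α) (hx : Function.Injective (L.leftQuotient ∘ x)) :
    ¬ L.IsRegular := fun hL =>
  Set.infinite_range_of_injective hx <|
    hL.finite_range_leftQuotient.subset (Set.range_comp_subset_range x L.leftQuotient)

/-- Over an alphabet with at least two distinct letters, the set `Q` of all primitive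
words is not a regular language. -/
theorem primitive_words_not_regular {α : Type*} (a b : α) (hab : a ≠ b) :
    ¬ Language.IsRegular ({w : List α | Primitive w} : Language α) := by
  refine Language.not_isRegular_of_injective_leftQuotient (fun n => List.replicate n a ++ [b]) ?_
  refine Function.Injective.of_lt_imp_ne fun n m hnm hquot =>
    not_primitive_append_self (List.replicate n a ++ [b]) ?_
  have hmem : List.replicate n a ++ [b] ∈
      Language.leftQuotient {w | Primitive w} (List.replicate m a ++ [b]) :=
    primitive_replicate_append_replicate hab hnm
  exact (Set.ext_iff.1 hquot _).2 hmem
end
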